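/- Let S be a finite set of squares of the n×n board and let C be a positive integer. If there is no collection of C − 1 diagonals such that every square of S lies on one of them, then there exist C squares in S, no two of which lie on a common diagonal. -/

import Mathlib

/-- The n×n board: squares (x,y) ∈ ℤ×ℤ with 1 ≤ x ≤ n and 1 ≤ y ≤ n. -/
noncomputable def board (n : ℕ) : Finset (ℤ × ℤ) := Finset.Icc 1 (n : ℤ) ×ˢ Finset.Icc 1 (n : ℤ)

/-- A line of the board: a row (fixed y), a column (fixed x), a positive
diagonal (fixed x − y), or a negative diagonal (fixed x + y). -/
inductive Line : Type where
  | row : ℤ → Line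
  | col : ℤ → Line
  | posDiag : ℤ → Line
  | negDiag : ℤ → Line
deriving DecidableEq

/-- The defining condition for a point to be on a given line. -/
def Line.pred : Line → ℤ × ℤ → Prop
  | .row b, p => p.2 = b
  | .col a, p => p.1 = a
  | .posDiag d, p => p.1 - p.2 = d
  | .negDiag s, p => p.1 + p.2 = s

instance (L : Line) (p : ℤ × ℤ) : Decidable (L.pred p) :=
  match L with
  | .row b => inferInstanceAs (Decidable (p.2 = b))
  | .col a => inferInstanceAs (Decidable (p.1 = a))
  | .posDiag d => inferInstanceAs (Decidable (p.1 - p.2 = d))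
  | .negDiag s => inferInstanceAs (Decidable (p.1 + p.2 = s))

/-- The set of squares of the n×n board lying on a line. -/
noncomputable def Line.squares (n : ℕ) (L : Line) : Finset (ℤ × ℤ) := (board n).filter L.pred

/-- The length of a line: its number of board squares. -/
noncomputable def Line.length (n : ℕ) (L : Line) : ℕ := (L.squares n).card

/-- Whether a line is a diagonal (of either orientation). -/
def Line.isDiag : Line → Prop
  | .posDiag _ => True
  | .negDiag _ => True
  | _ => False

/-- The set of board squares attacked by a placement S of queens: squares q on
the board such that some queen p ∈ S with p ≠ q shares a row, column, or
diagonal with q. -/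
noncomputable def attacked (n : ℕ) (S : Finset (ℤ × ℤ)) : Finset (ℤ × ℤ) :=
  S.biUnion fun p => (board n).filter fun q =>
    q ≠ p ∧ (p.1 = q.1 ∨ p.2 = q.2 ∨ p.1 - p.2 = q.1 - q.2 ∨ p.1 + p.2 = q.1 + q.2)

/-- G(m) = ⌊m²/12⌋ + 1 if m ≡ 3, 6, 9 (mod 12) or m = 10; ⌊m²/12⌋ otherwise. -/
def G (m : ℕ) : ℕ :=
  if m % 12 = 3 ∨ m % 12 = 6 ∨ m % 12 = 9 ∨ m = 10 then m ^ 2 / 12 + 1 else m ^ 2 / 12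

/-!
Send each square `(x, y)` to the pair `(x - y, x + y)`: this is injective, and two squares share
a diagonal exactly when the images share a coordinate. So `S` becomes the edge set of a bipartite
graph between positive and negative diagonals, a set of diagonals covering `S` is a vertex cover,
and `C` pairwise non-attacking squares form a matching of size `C`. König's theorem (deduced
from Hall's theorem with deficiency) finishes the proof.
-/

open Finset

-- Hall's theorem with deficiency `d`, via Hall's theorem for `t` padded with `d` common dummies.
theorem exists_matching_of_card_le_card_biUnion_add {ι β : Type*} [Fintype ι] [DecidableEq β]
    (t : ι → Finset β) (d : ℕ) (h : ∀ s : Finset ι, #s ≤ #(s.biUnion t) + d) :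
    ∃ M : Finset (ι × β), (∀ e ∈ M, e.2 ∈ t e.1) ∧ Set.InjOn Prod.fst (M : Set (ι × β)) ∧
      Set.InjOn Prod.snd (M : Set (ι × β)) ∧ Fintype.card ι ≤ #M + d := by
  classical
  let t' (i : ι) : Finset (β ⊕ Fin d) := (t i).disjSum univ
  have hall (s : Finset ι) : #s ≤ #(s.biUnion t') := by
    obtain rfl | ⟨i, hi⟩ := s.eq_empty_or_nonempty
    · simp
    calc #s ≤ #((s.biUnion t).disjSum univ) := by simpa [card_disjSum] using h s
      _ ≤ #(s.biUnion t') := card_le_card fun x hx => by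
        rcases x with b | j
        · simpa [t'] using hx
        · simpa [t'] using ⟨i, hi⟩
  obtain ⟨g, hg_inj, hg_mem⟩ := (all_card_le_biUnion_card_iff_exists_injective t').mp hall
  let M := (univ ×ˢ univ.biUnion t).filter fun e => g e.1 = .inl e.2
  have mem_t {i : ι} {b : β} (h : g i = .inl b) : b ∈ t i := by simpa [h, t'] using hg_mem i
  have mem_M (e : ι × β) : e ∈ M ↔ g e.1 = .inl e.2 := by
    refine ⟨fun he => (mem_filter.mp he).2, fun he => mem_filter.mpr ⟨?_, he⟩⟩
    exact mem_product.mpr ⟨mem_univ _, mem_biUnion.mpr ⟨e.1, mem_univ _, mem_t he⟩⟩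
  refine ⟨M, fun e he => mem_t ((mem_M e).1 he), fun e he e' he' hee' => ?_,
    fun e he e' he' hee' => ?_, ?_⟩
  · refine Prod.ext hee' (Sum.inl_injective (β := Fin d) ?_)
    rw [← (mem_M e).1 he, ← (mem_M e').1 he', hee']
  · refine Prod.ext (hg_inj ?_) hee'
    rw [(mem_M e).1 he, (mem_M e').1 he', hee']
  · let R := univ.filter fun i => (g i).isRight
    have hR : #R ≤ d := by
      simpa using card_le_card_of_injOn g (t := univ.map .inr)
        (fun i hi => by
          obtain ⟨j, hj⟩ := Sum.isRight_iff.mp (mem_filter.mp hi).2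
          simp [hj]) hg_inj.injOn
    have hcover : (univ : Finset ι) ⊆ M.image Prod.fst ∪ R := fun i _ => by
      cases hgi : g i with
      | inl b => exact mem_union_left _ (mem_image.mpr ⟨(i, b), (mem_M _).2 hgi, rfl⟩)
      | inr j => exact mem_union_right _ (by simp [R, hgi])
    calc Fintype.card ι = #(univ : Finset ι) := rfl
      _ ≤ #(M.image Prod.fst) + #R := (card_le_card hcover).trans (card_union_le _ _)
      _ ≤ #M + d := add_le_add card_image_le hR

theorem exists_matching_card_eq_of_forall_cover {α β : Type*} [DecidableEq α] [DecidableEq β]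
    (E : Finset (α × β)) (C : ℕ)
    (h : ∀ (A : Finset α) (B : Finset β), (∀ e ∈ E, e.1 ∈ A ∨ e.2 ∈ B) → C ≤ #A + #B) :
    ∃ M ⊆ E, #M = C ∧ Set.InjOn Prod.fst (M : Set (α × β)) ∧
      Set.InjOn Prod.snd (M : Set (α × β)) := by
  set A := E.image Prod.fst
  have hCA : C ≤ #A := by simpa using h A ∅ fun e he => .inl (mem_image_of_mem _ he)
  let t (a : A) : Finset β := (E.filter fun e => e.1 = a.1).image Prod.snd
  have hall (s : Finset A) : #s ≤ #(s.biUnion t) + (#A - C) := by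
    have hcover := h (A \ s.map (.subtype _)) (s.biUnion t) fun e he => by
      by_cases hs : e.1 ∈ s.map (.subtype _)
      · obtain ⟨a, ha, hae⟩ := mem_map.mp hs
        exact .inr (mem_biUnion.mpr ⟨a, ha, mem_image.mpr ⟨e, mem_filter.mpr ⟨he, hae.symm⟩, rfl⟩⟩)
      · exact .inl (mem_sdiff.mpr ⟨mem_image_of_mem _ he, hs⟩)
    rw [card_sdiff_of_subset (fun x hx => by obtain ⟨a, -, rfl⟩ := mem_map.mp hx; exact a.2),
      card_map] at hcover
    have hsA : #s ≤ #A := by simpa using s.card_le_univ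
    omega
  obtain ⟨M, hMt, hM₁, hM₂, hMcard⟩ := exists_matching_of_card_le_card_biUnion_add t _ hall
  let lift : A × β ↪ α × β :=
    ⟨Prod.map Subtype.val id, Subtype.val_injective.prodMap Function.injective_id⟩
  have hME : M.map lift ⊆ E := fun x hx => by
    obtain ⟨e, he, rfl⟩ := mem_map.mp hx
    obtain ⟨x, hx, hxe⟩ := mem_image.mp (hMt e he)
    obtain ⟨hxE, hxe'⟩ := mem_filter.mp hx
    convert hxE using 1
    exact Prod.ext hxe'.symm hxe.symm
  have hCM : C ≤ #(M.map lift) := by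
    rw [card_map]
    simp only [Fintype.card_coe] at hMcard
    omega
  obtain ⟨M', hM'M, hM'card⟩ := exists_subset_card_eq hCM
  refine ⟨M', hM'M.trans hME, hM'card, Set.InjOn.mono (coe_subset.mpr hM'M) ?_,
    Set.InjOn.mono (coe_subset.mpr hM'M) ?_⟩ <;> rw [coe_map] <;>
    rintro _ ⟨e, he, rfl⟩ _ ⟨e', he', rfl⟩ hee'
  · exact congrArg lift (hM₁ he he' (Subtype.ext hee'))
  · exact congrArg lift (hM₂ he he' hee')

theorem exists_diagonal_cover (S : Finset (ℤ × ℤ)) (A B : Finset ℤ)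
    (hAB : ∀ p ∈ S, p.1 - p.2 ∈ A ∨ p.1 + p.2 ∈ B) :
    ∃ D : Finset Line, #D ≤ #A + #B ∧ (∀ L ∈ D, L.isDiag) ∧ ∀ p ∈ S, ∃ L ∈ D, L.pred p := by
  classical
  refine ⟨A.image .posDiag ∪ B.image .negDiag, ?_, ?_, fun p hp => ?_⟩
  · exact (card_union_le _ _).trans (add_le_add card_image_le card_image_le)
  · intro L hL
    rcases mem_union.mp hL with hL | hL <;> obtain ⟨_, -, rfl⟩ := mem_image.mp hL <;> trivial
  · rcases hAB p hp with h | h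
    · exact ⟨.posDiag _, mem_union_left _ (mem_image_of_mem _ h), rfl⟩
    · exact ⟨.negDiag _, mem_union_right _ (mem_image_of_mem _ h), rfl⟩

theorem exists_diagonally_independent_squares_general (C : ℕ)
    (S : Finset (ℤ × ℤ))
    (hcov : ¬ ∃ D : Finset Line, D.card ≤ C - 1 ∧ (∀ L ∈ D, L.isDiag) ∧
      ∀ p ∈ S, ∃ L ∈ D, L.pred p) :
    ∃ T : Finset (ℤ × ℤ), T ⊆ S ∧ T.card = C ∧
      ∀ p ∈ T, ∀ q ∈ T, p ≠ q →
        p.1 - p.2 ≠ q.1 - q.2 ∧ p.1 + p.2 ≠ q.1 + q.2 := by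
  let diag : ℤ × ℤ ↪ ℤ × ℤ := ⟨fun p => (p.1 - p.2, p.1 + p.2), fun p q h => by
    simp only [Prod.mk.injEq] at h
    ext <;> omega⟩
  have hcard (A B : Finset ℤ) (hAB : ∀ e ∈ S.map diag, e.1 ∈ A ∨ e.2 ∈ B) : C ≤ #A + #B := by
    obtain ⟨D, hD, hdiag, hcovD⟩ :=
      exists_diagonal_cover S A B fun p hp => hAB _ (mem_map_of_mem diag hp)
    by_contra! hlt
    exact hcov ⟨D, by omega, hdiag, hcovD⟩
  obtain ⟨M, hMS, hMcard, hM₁, hM₂⟩ := exists_matching_card_eq_of_forall_cover _ C hcard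
  obtain ⟨T, hTS, rfl⟩ := subset_map_iff.mp hMS
  refine ⟨T, hTS, by rwa [card_map] at hMcard, fun p hp q hq hpq => ⟨fun h => ?_, fun h => ?_⟩⟩
  · exact hpq (diag.injective (hM₁ (mem_map_of_mem _ hp) (mem_map_of_mem _ hq) h))
  · exact hpq (diag.injective (hM₂ (mem_map_of_mem _ hp) (mem_map_of_mem _ hq) h))

/-- If a finite set S of board squares cannot be covered by C − 1
diagonals, then S contains C squares no two of which share a diagonal. -/
theorem exists_diagonally_independent_squares (n C : ℕ) (hn : 0 < n) (hC : 0 < C)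
    (S : Finset (ℤ × ℤ)) (hS : S ⊆ board n)
    (hcov : ¬ ∃ D : Finset Line, D.card ≤ C - 1 ∧ (∀ L ∈ D, L.isDiag) ∧
      ∀ p ∈ S, ∃ L ∈ D, L.pred p) :
    ∃ T : Finset (ℤ × ℤ), T ⊆ S ∧ T.card = C ∧
      ∀ p ∈ T, ∀ q ∈ T, p ≠ q →
        p.1 - p.2 ≠ q.1 - q.2 ∧ p.1 + p.2 ≠ q.1 + q.2 :=
  exists_diagonally_independent_squares_general C S hcov
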